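/- arXiv:0903.0447 — 2 statements merged into one kernel-verified Lean document; each statement's English description precedes it below -/
import Mathlib

section
/- Let Med(F) = inf{x ∈ ℝ : F((−∞,x]) ≥ 1/2} denote the median of a distribution F on ℝ. Let H₀ be any probability measure on ℝ^d, let δ > 0, and let G₀ be a distribution on ℝ with finite first moment. Then for each coordinate i, lim_{h→∞} inf_{H ∈ F_{δ,h}(G₀)} Med(H_i) = +∞, where H_i denotes the i-th marginal of H. In particular the coordinatewise median is δ-consistent at infinity at every central model H₀ for all δ > 0. -/
open MeasureTheory

/-- `G` (a measure on ℝ^d) has all its marginals stochastically larger than the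
distribution `G₀` on ℝ shifted by `h`, i.e. `Gᵢ((-∞,x]) ≤ G₀((-∞,x-h])` for all `x`. -/
def StochLargerShift {d : ℕ} (G : Measure (Fin d → ℝ)) (G₀ : Measure ℝ) (h : ℝ) : Prop :=
  ∀ i : Fin d, ∀ x : ℝ, (G.map (fun v => v i)) (Set.Iic x) ≤ G₀ (Set.Iic (x - h))

/-- The neighborhood `F_{δ,h}(G₀)` of mixtures `(1/2-δ)H₀ + (1/2+δ)G`,
`G ∈ G_h(G₀)`. -/
def mixNbhd {d : ℕ} (H₀ : Measure (Fin d → ℝ)) (G₀ : Measure ℝ) (δ h : ℝ) :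
    Set (Measure (Fin d → ℝ)) :=
  {H | ∃ G : Measure (Fin d → ℝ), IsProbabilityMeasure G ∧ StochLargerShift G G₀ h ∧
    H = ENNReal.ofReal (1 / 2 - δ) • H₀ + ENNReal.ofReal (1 / 2 + δ) • G}

/-- `T` is δ-consistent at infinity at the central model `H₀`: for every
distribution `G₀` on ℝ with finite first moment and every coordinate `i`,
`lim_{h→∞} inf_{H ∈ F_{δ,h}(G₀)} Tᵢ(H) = +∞`. -/
def DeltaConsistentAtInfinity {d : ℕ} (T : Measure (Fin d → ℝ) → (Fin d → ℝ))
    (H₀ : Measure (Fin d → ℝ)) (δ : ℝ) : Prop :=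
  ∀ G₀ : Measure ℝ, IsProbabilityMeasure G₀ → Integrable (fun x : ℝ => |x|) G₀ →
    ∀ i : Fin d, ∀ M : ℝ, ∃ h₀ : ℝ, ∀ h ≥ h₀, ∀ H ∈ mixNbhd H₀ G₀ δ h, M ≤ T H i

/-- The median `Med(F) = inf{x : F((-∞,x]) ≥ 1/2}` of a distribution on ℝ. -/
noncomputable def Med (F : Measure ℝ) : ℝ :=
  sInf {x : ℝ | (1 / 2 : ENNReal) ≤ F (Set.Iic x)}

/-! For `H ∈ F_{δ,h}(G₀)` the `i`-th marginal gives `(-∞, x]` mass at most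
`(1/2 - δ) + (1/2 + δ) G₀((-∞, x - h])`. Since `G₀((-∞, t]) → 0` as `t → -∞` and `1/2 - δ < 1/2`,
for `h` large this is `< 1/2` for all `x ≤ M`, while the total mass is at least `1/2 + δ > 1/2`;
hence the median of the marginal is at least `M`. -/

open Set Filter Topology

theorem ENNReal.ofReal_half : ENNReal.ofReal (1 / 2) = 1 / 2 := by
  simp

theorem tendsto_measure_Iic_atBot {α : Type*} [MeasurableSpace α] [LinearOrder α]
    [TopologicalSpace α] [ClosedIicTopology α] [OpensMeasurableSpace α] [NoMinOrder α]
    [(atBot : Filter α).IsCountablyGenerated] (μ : Measure α) [IsFiniteMeasure μ] :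
    Tendsto (fun x => μ (Iic x)) atBot (𝓝 0) := by
  refine .of_neBot_imp fun hne => ?_
  obtain ⟨⟨a⟩, -⟩ := atBot_neBot_iff.mp hne
  have hempty : ⋂ x : α, Iic x = ∅ := iInter_Iic_eq_empty_iff.mpr (by simp)
  simpa [hempty, Function.comp_def] using tendsto_measure_iInter_atBot (μ := μ)
    (fun _ => measurableSet_Iic.nullMeasurableSet) (fun _ _ => Iic_subset_Iic.mpr)
    ⟨a, measure_ne_top μ _⟩

theorem le_Med_of_forall_lt {F : Measure ℝ} {M : ℝ} (hF : 1 / 2 < F univ)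
    (h : ∀ x < M, F (Iic x) < 1 / 2) : M ≤ Med F := by
  obtain ⟨y, hy⟩ := ((tendsto_measure_Iic_atTop F).eventually (lt_mem_nhds hF)).exists
  exact le_csInf ⟨y, hy.le⟩ fun x hx => not_lt.mp fun hxM => (h x hxM).not_ge hx

section Mixture

variable {d : ℕ} {H₀ : Measure (Fin d → ℝ)} {G₀ : Measure ℝ} {δ h : ℝ}

theorem map_eval_mix_apply (a b : ENNReal) (G : Measure (Fin d → ℝ)) (i : Fin d) (s : Set ℝ) :
    ((a • H₀ + b • G).map fun v => v i) s =
      a * (H₀.map fun v => v i) s + b * (G.map fun v => v i) s := by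
  rw [Measure.map_add _ _ (measurable_pi_apply i), Measure.map_smul, Measure.map_smul]
  rfl

theorem half_lt_map_eval_univ_of_mem_mixNbhd (hδ : 0 < δ) {H : Measure (Fin d → ℝ)}
    (hH : H ∈ mixNbhd H₀ G₀ δ h) (i : Fin d) : 1 / 2 < (H.map fun v => v i) univ := by
  obtain ⟨G, hG, -, rfl⟩ := hH
  have : IsProbabilityMeasure (G.map fun v => v i) :=
    Measure.isProbabilityMeasure_map (measurable_pi_apply i).aemeasurable
  calc (1 / 2 : ENNReal) < ENNReal.ofReal (1 / 2 + δ) := by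
        rw [← ENNReal.ofReal_half, ENNReal.ofReal_lt_ofReal_iff (by linarith)]; linarith
    _ ≤ _ := by simp [map_eval_mix_apply]

theorem exists_map_eval_Iic_lt_half_of_mem_mixNbhd [IsProbabilityMeasure H₀]
    [IsFiniteMeasure G₀] (hδ : 0 < δ) :
    ∃ t₀ : ℝ, ∀ h, ∀ H ∈ mixNbhd H₀ G₀ δ h, ∀ i x, x - h ≤ t₀ →
      (H.map fun v => v i) (Iic x) < 1 / 2 := by
  set a := ENNReal.ofReal (1 / 2 - δ)
  set b := ENNReal.ofReal (1 / 2 + δ)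
  have hlim : Tendsto (fun t => a * 1 + b * G₀ (Iic t)) atBot (𝓝 (a * 1 + b * 0)) :=
    tendsto_const_nhds.add
      (ENNReal.Tendsto.const_mul (tendsto_measure_Iic_atBot G₀) (Or.inr ENNReal.ofReal_ne_top))
  have ha : a * 1 + b * 0 < 1 / 2 := by
    rw [mul_one, mul_zero, add_zero, ← ENNReal.ofReal_half,
      ENNReal.ofReal_lt_ofReal_iff (by norm_num)]
    linarith
  obtain ⟨t₀, ht₀⟩ := eventually_atBot.mp (hlim.eventually (gt_mem_nhds ha))
  refine ⟨t₀, ?_⟩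
  rintro h H ⟨G, hG, hGh, rfl⟩ i x hx
  calc _ = a * (H₀.map fun v => v i) (Iic x) + b * (G.map fun v => v i) (Iic x) :=
        map_eval_mix_apply a b G i _
    _ ≤ a * 1 + b * G₀ (Iic t₀) := by
        have : IsProbabilityMeasure (H₀.map fun v => v i) :=
          Measure.isProbabilityMeasure_map (measurable_pi_apply i).aemeasurable
        exact add_le_add (mul_le_mul_right prob_le_one a)
          (mul_le_mul_right ((hGh i x).trans (measure_mono (Iic_subset_Iic.mpr hx))) b)
    _ < 1 / 2 := ht₀ t₀ le_rfl

theorem exists_le_Med_map_eval_of_mem_mixNbhd [IsProbabilityMeasure H₀]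
    [IsFiniteMeasure G₀] (hδ : 0 < δ) (i : Fin d) (M : ℝ) :
    ∃ h₀ : ℝ, ∀ h ≥ h₀, ∀ H ∈ mixNbhd H₀ G₀ δ h, M ≤ Med (H.map fun v => v i) := by
  obtain ⟨t₀, ht₀⟩ := exists_map_eval_Iic_lt_half_of_mem_mixNbhd (H₀ := H₀) (G₀ := G₀) hδ
  refine ⟨M - t₀, fun h hh H hH => ?_⟩
  exact le_Med_of_forall_lt (half_lt_map_eval_univ_of_mem_mixNbhd hδ hH i)
    fun x hx => ht₀ h H hH i x (by linarith)

end Mixture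

theorem coordinatewise_median_deltaConsistent_general
    {d : ℕ} (H₀ : Measure (Fin d → ℝ)) [IsProbabilityMeasure H₀]
    (δ : ℝ) (hδ : 0 < δ)
    (G₀ : Measure ℝ) [IsProbabilityMeasure G₀] :
    (∀ i : Fin d, ∀ M : ℝ, ∃ h₀ : ℝ, ∀ h ≥ h₀, ∀ H ∈ mixNbhd H₀ G₀ δ h,
        M ≤ Med (H.map (fun v => v i))) ∧
      DeltaConsistentAtInfinity
        (fun H : Measure (Fin d → ℝ) => fun i => Med (H.map (fun v => v i))) H₀ δ :=
  ⟨exists_le_Med_map_eval_of_mem_mixNbhd hδ,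
    fun _ _ _ => exists_le_Med_map_eval_of_mem_mixNbhd hδ⟩

/-- The coordinatewise median is δ-consistent at infinity at every central model,
for every `δ > 0`: for every distribution `G₀` on ℝ with finite first moment and
every coordinate `i`, `lim_{h→∞} inf_{H ∈ F_{δ,h}(G₀)} Med(Hᵢ) = +∞`. -/
theorem coordinatewise_median_deltaConsistent
    {d : ℕ} (H₀ : Measure (Fin d → ℝ)) [IsProbabilityMeasure H₀]
    (δ : ℝ) (hδ : 0 < δ)
    (G₀ : Measure ℝ) [IsProbabilityMeasure G₀]
    (hG₀ : Integrable (fun x : ℝ => |x|) G₀) :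
    (∀ i : Fin d, ∀ M : ℝ, ∃ h₀ : ℝ, ∀ h ≥ h₀, ∀ H ∈ mixNbhd H₀ G₀ δ h,
        M ≤ Med (H.map (fun v => v i))) ∧
      DeltaConsistentAtInfinity
        (fun H : Measure (Fin d → ℝ) => fun i => Med (H.map (fun v => v i))) H₀ δ :=
  coordinatewise_median_deltaConsistent_general H₀ δ hδ G₀
end

section
/- Fix z ∈ ℝ^d. Let H₀ have Lebesgue density h₀(d²(y,μ₀,Σ₀)) (elliptically symmetric with center μ₀ and positive definite scatter Σ₀). For I ⊆ {1,…,d}, let H(I,z) denote the law of the vector whose i-th coordinate equals z_i if i ∈ I and equals Y_i if i ∉ I, Y ~ H₀. Define g(H,m,Σ) = ∫ ψ(d²(x,m,Σ))(x−m) dH(x). Suppose: ε ↦ μ(ε) ∈ ℝ^d and ε ↦ Σ(ε) (symmetric positive definite) are differentiable at 0 with μ(0) = μ₀ and Σ(0) = Σ₀; for all ε in a right neighborhood of 0, ∑_{I ⊆ {1,…,d}} (1−ε)^{d−|I|} ε^{|I|} · g(H(I,z),μ(ε),Σ(ε)) = 0; each (m,Σ) ↦ g(H(I,z),m,Σ)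 is continuously differentiable near (μ₀,Σ₀); g(H₀,μ₀,Σ) = 0 for all symmetric positive definite Σ near Σ₀; and the Jacobian of m ↦ g(H₀,m,Σ₀) at μ₀ equals −A_ψ I_d with A_ψ ≠ 0. Then the influence function under the fully independent contamination model satisfies μ'(0) = (1/A_ψ) ∑_{k=1}^d g(H({k},z), μ₀, Σ₀). -/
/-!
To first order at `ε = 0` the FICM weight `(1 - ε)^(d - |I|) ε^|I|` is `1 - d ε` for `I = ∅`,
`ε` for a singleton and `0` otherwise. Differentiating the estimating equation at `0⁺` thus gives
`Dg(H₀)(μ', Σ') - d g(H₀, μ₀, Σ₀) + ∑ₖ g(H({k}, z), μ₀, Σ₀) = 0`. Fisher consistency along the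
curve `Σ(ε)` kills both `g(H₀, μ₀, Σ₀)` and the scatter part of `Dg(H₀)`, and the location part
is `-A_ψ μ'`.
-/

open MeasureTheory

/-- Squared Mahalanobis distance `d²(x,m,S) = (x-m)ᵀ S⁻¹ (x-m)`. -/
noncomputable def mahala2 {d : ℕ} (x m : Fin d → ℝ) (S : Matrix (Fin d) (Fin d) ℝ) : ℝ :=
  dotProduct (x - m) ((S⁻¹).mulVec (x - m))

/-- `g(H,m,Σ) = ∫ ψ(d²(x,m,Σ)) (x-m) dH(x)`. -/
noncomputable def gfun {d : ℕ} (ψ : ℝ → ℝ) (H : Measure (Fin d → ℝ))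
    (m : Fin d → ℝ) (S : Matrix (Fin d) (Fin d) ℝ) : Fin d → ℝ :=
  ∫ x, ψ (mahala2 x m S) • (x - m) ∂H

/-- `H(I,z)`: the law of the vector whose `i`-th coordinate is `z i` for `i ∈ I` and
`Y i` for `i ∉ I`, where `Y ~ H₀`. -/
noncomputable def partialContam {d : ℕ} (H₀ : Measure (Fin d → ℝ)) (z : Fin d → ℝ)
    (I : Finset (Fin d)) : Measure (Fin d → ℝ) :=
  H₀.map (fun y => fun i => if i ∈ I then z i else y i)

open Filter Topology

theorem Finset.sum_ite_card_eq_one {ι M : Type*} [Fintype ι] [AddCommMonoid M]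
    (v : Finset ι → M) :
    ∑ I : Finset ι, (if I.card = 1 then v I else 0) = ∑ k : ι, v {k} := by
  rw [← Finset.sum_filter, ← Finset.powerset_univ, ← Finset.powersetCard_eq_filter,
    Finset.powersetCard_one, Finset.sum_map]
  rfl

theorem hasDerivAt_binomialWeight (n k : ℕ) :
    HasDerivAt (fun ε : ℝ => (1 - ε) ^ (n - k) * ε ^ k)
      ((if k = 0 then -(n : ℝ) else 0) + if k = 1 then 1 else 0) 0 := by
  have h : HasDerivAt (fun ε : ℝ => (1 - ε) ^ (n - k) * ε ^ k) _ 0 :=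
    (((hasDerivAt_id (0 : ℝ)).const_sub 1).fun_pow (n - k)).fun_mul (hasDerivAt_pow k (0 : ℝ))
  convert h using 1
  rcases Nat.lt_trichotomy k 1 with hk | rfl | hk
  · obtain rfl : k = 0 := by omega
    simp
  · simp
  · have hk0 : k ≠ 0 := by omega
    have hk1 : k ≠ 1 := by omega
    simp [hk0, hk1, zero_pow hk0, zero_pow (by omega : k - 1 ≠ 0)]

theorem hasDerivAt_binomialMixture {ι E : Type*} [Fintype ι] [NormedAddCommGroup E]
    [NormedSpace ℝ E] (n : ℕ) {G : Finset ι → ℝ → E} {G' : Finset ι → E}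
    (hG : ∀ I, HasDerivAt (G I) (G' I) 0) :
    HasDerivAt (fun ε => ∑ I, ((1 - ε) ^ (n - I.card) * ε ^ I.card) • G I ε)
      (G' ∅ - (n : ℝ) • G ∅ 0 + ∑ k, G {k} 0) 0 := by
  classical
  refine (HasDerivAt.fun_sum (u := Finset.univ) fun I _ =>
    (hasDerivAt_binomialWeight n I.card).smul (hG I)).congr_deriv ?_
  simp only [sub_zero, one_pow, one_mul, zero_pow_eq, add_smul, ite_smul, one_smul, zero_smul,
    Finset.sum_add_distrib, Finset.card_eq_zero, Finset.sum_ite_eq', Finset.mem_univ, if_true,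
    Finset.sum_ite_card_eq_one, neg_smul]
  abel

theorem HasDerivAt.eq_zero_of_eventually_nhdsGT {E : Type*} [NormedAddCommGroup E]
    [NormedSpace ℝ E] {f : ℝ → E} {f' : E} {x : ℝ} (hf : HasDerivAt f f' x)
    (h : ∀ᶠ t in 𝓝[>] x, f t = 0) : f x = 0 ∧ f' = 0 := by
  have hx : f x = 0 := tendsto_nhds_unique
    (hf.continuousAt.tendsto.mono_left nhdsWithin_le_nhds)
    (tendsto_const_nhds.congr' (h.mono fun _ ht => ht.symm))
  refine ⟨hx, (uniqueDiffWithinAt_Ioi x).eq_deriv _ hf.hasDerivWithinAt ?_⟩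
  exact (hasDerivWithinAt_const x _ 0).congr_of_eventuallyEq h hx

theorem fderiv_apply_inl {𝕜 E F G : Type*} [NontriviallyNormedField 𝕜]
    [NormedAddCommGroup E] [NormedSpace 𝕜 E] [NormedAddCommGroup F] [NormedSpace 𝕜 F]
    [NormedAddCommGroup G] [NormedSpace 𝕜 G] {f : E × F → G} {x : E} {y : F}
    {L : E →L[𝕜] G} (hf : DifferentiableAt 𝕜 f (x, y))
    (hL : HasFDerivAt (fun a => f (a, y)) L x) (u : E) :
    fderiv 𝕜 f (x, y) (u, 0) = L u := by
  rw [← (hf.hasFDerivAt.comp x (hasFDerivAt_prodMk_left x y)).unique hL]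
  rfl

/-- `g I p` stands for the estimating function at `p = (m, Σ)` under the law `H(I, z)`, so `g ∅`
is the one under the model `H₀`. -/
theorem eq_of_binomialMixture_estimatingEq {ι E F : Type*} [Fintype ι]
    [NormedAddCommGroup E] [NormedSpace ℝ E] [NormedAddCommGroup F] [NormedSpace ℝ F]
    (n : ℕ) (g : Finset ι → E × F → E) {m : ℝ → E} {S : ℝ → F} {m' : E} {S' : F}
    (hm : HasDerivAt m m' 0) (hS : HasDerivAt S S' 0)
    (hg : ∀ I, DifferentiableAt ℝ (g I) (m 0, S 0))
    (heq : ∀ᶠ ε in 𝓝[>] 0,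
      ∑ I, ((1 - ε) ^ (n - I.card) * ε ^ I.card) • g I (m ε, S ε) = 0)
    (hfisher : ∀ᶠ ε in 𝓝[>] 0, g ∅ (m 0, S ε) = 0) {A : ℝ} (hA : A ≠ 0)
    (hjac : HasFDerivAt (fun a => g ∅ (a, S 0)) (-A • ContinuousLinearMap.id ℝ E) (m 0)) :
    m' = A⁻¹ • ∑ k, g {k} (m 0, S 0) := by
  set D := fderiv ℝ (g ∅) (m 0, S 0)
  have hcurve : ∀ I, HasDerivAt (fun ε => g I (m ε, S ε))
      (fderiv ℝ (g I) (m 0, S 0) (m', S')) 0 := fun I =>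
    (hg I).hasFDerivAt.comp_hasDerivAt 0 (hm.prodMk hS)
  have hscatter : HasDerivAt (fun ε => g ∅ (m 0, S ε)) (D (0, S')) 0 :=
    (hg ∅).hasFDerivAt.comp_hasDerivAt 0 ((hasDerivAt_const 0 (m 0)).prodMk hS)
  obtain ⟨hg₀, hDS⟩ := hscatter.eq_zero_of_eventually_nhdsGT hfisher
  have hDm : D (m', 0) = -A • m' := fderiv_apply_inl (hg ∅) hjac m'
  have hsplit : D (m', S') = D (m', 0) + D (0, S') := by
    rw [← map_add, Prod.mk_add_mk, add_zero, zero_add]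
  have hmix : D (m', S') - (n : ℝ) • g ∅ (m 0, S 0) + ∑ k, g {k} (m 0, S 0) = 0 :=
    ((hasDerivAt_binomialMixture n hcurve).eq_zero_of_eventually_nhdsGT heq).2
  rw [hsplit, hDm, hDS, hg₀, add_zero, smul_zero, sub_zero, neg_smul, neg_add_eq_zero] at hmix
  rw [← hmix, inv_smul_smul₀ hA]

theorem partialContam_empty {d : ℕ} (H₀ : Measure (Fin d → ℝ)) (z : Fin d → ℝ) :
    partialContam H₀ z ∅ = H₀ := by
  simp only [partialContam, Finset.notMem_empty, if_false]
  exact Measure.map_id'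

theorem influence_function_FICM_general
    {d : ℕ} (ψ : ℝ → ℝ) (μ₀ : Fin d → ℝ)
    (S₀ : Fin d → Fin d → ℝ)
    (ν : Measure (Fin d → ℝ))
    (z : Fin d → ℝ)
    (μfun : ℝ → Fin d → ℝ) (Sfun : ℝ → Fin d → Fin d → ℝ)
    (μder : Fin d → ℝ)
    (hμder : HasDerivAt μfun μder 0) (hSdiff : DifferentiableAt ℝ Sfun 0)
    (hμ0 : μfun 0 = μ₀) (hS0 : Sfun 0 = S₀)
    (hpos : ∀ᶠ ε in nhdsWithin 0 (Set.Ioi (0 : ℝ)), (Matrix.of (Sfun ε)).PosDef)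
    (heq : ∀ᶠ ε in nhdsWithin 0 (Set.Ioi (0 : ℝ)),
      ∑ I : Finset (Fin d),
        ((1 - ε) ^ (d - I.card) * ε ^ I.card) •
          gfun ψ (partialContam ν z I) (μfun ε) (Matrix.of (Sfun ε)) = 0)
    (hsmooth : ∀ I : Finset (Fin d), ContDiffAt ℝ 1
      (fun p : (Fin d → ℝ) × (Fin d → Fin d → ℝ) =>
        gfun ψ (partialContam ν z I) p.1 (Matrix.of p.2))
      (μ₀, S₀))
    (hfisher : ∀ᶠ S in nhds S₀, (Matrix.of S).PosDef →
      gfun ψ ν μ₀ (Matrix.of S) = 0)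
    (Aψ : ℝ) (hAψ : Aψ ≠ 0)
    (hjac : HasFDerivAt (fun m => gfun ψ ν m (Matrix.of S₀))
      (-Aψ • ContinuousLinearMap.id ℝ (Fin d → ℝ)) μ₀) :
    μder = Aψ⁻¹ • ∑ k : Fin d, gfun ψ (partialContam ν z {k}) μ₀ (Matrix.of S₀) := by
  subst hμ0 hS0
  rw [← partialContam_empty ν z] at hfisher hjac
  have hS : Tendsto Sfun (𝓝[>] 0) (𝓝 (Sfun 0)) :=
    hSdiff.continuousAt.tendsto.mono_left nhdsWithin_le_nhds
  refine eq_of_binomialMixture_estimatingEq d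
    (fun I p => gfun ψ (partialContam ν z I) p.1 (Matrix.of p.2)) hμder hSdiff.hasDerivAt
    (fun I => (hsmooth I).differentiableAt one_ne_zero) heq ?_ hAψ hjac
  filter_upwards [hS.eventually hfisher, hpos] with ε hε hεpos
  exact hε hεpos

/-- The influence function of an M-estimator of multivariate location under the
fully independent contamination model (FICM): under the stated regularity
conditions, `μ'(0) = (1/A_ψ) ∑_{k=1}^d g(H({k},z), μ₀, Σ₀)`. -/
theorem influence_function_FICM
    {d : ℕ} (ψ : ℝ → ℝ) (h₀ : ℝ → ℝ) (μ₀ : Fin d → ℝ)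
    (S₀ : Fin d → Fin d → ℝ) (hS₀ : (Matrix.of S₀).PosDef)
    (ν : Measure (Fin d → ℝ)) [IsProbabilityMeasure ν]
    (hν : ν = volume.withDensity
      (fun y => ENNReal.ofReal (h₀ (mahala2 y μ₀ (Matrix.of S₀)))))
    (z : Fin d → ℝ)
    (μfun : ℝ → Fin d → ℝ) (Sfun : ℝ → Fin d → Fin d → ℝ)
    (μder : Fin d → ℝ)
    (hμder : HasDerivAt μfun μder 0) (hSdiff : DifferentiableAt ℝ Sfun 0)
    (hμ0 : μfun 0 = μ₀) (hS0 : Sfun 0 = S₀)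
    (hpos : ∀ᶠ ε in nhdsWithin 0 (Set.Ioi (0 : ℝ)), (Matrix.of (Sfun ε)).PosDef)
    (heq : ∀ᶠ ε in nhdsWithin 0 (Set.Ioi (0 : ℝ)),
      ∑ I : Finset (Fin d),
        ((1 - ε) ^ (d - I.card) * ε ^ I.card) •
          gfun ψ (partialContam ν z I) (μfun ε) (Matrix.of (Sfun ε)) = 0)
    (hsmooth : ∀ I : Finset (Fin d), ContDiffAt ℝ 1
      (fun p : (Fin d → ℝ) × (Fin d → Fin d → ℝ) =>
        gfun ψ (partialContam ν z I) p.1 (Matrix.of p.2))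
      (μ₀, S₀))
    (hfisher : ∀ᶠ S in nhds S₀, (Matrix.of S).PosDef →
      gfun ψ ν μ₀ (Matrix.of S) = 0)
    (Aψ : ℝ) (hAψ : Aψ ≠ 0)
    (hjac : HasFDerivAt (fun m => gfun ψ ν m (Matrix.of S₀))
      (-Aψ • ContinuousLinearMap.id ℝ (Fin d → ℝ)) μ₀) :
    μder = Aψ⁻¹ • ∑ k : Fin d, gfun ψ (partialContam ν z {k}) μ₀ (Matrix.of S₀) :=
  influence_function_FICM_general ψ μ₀ S₀ ν z μfun Sfun μder hμder hSdiff hμ0 hS0 hpos heq hsmooth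
    hfisher Aψ hAψ hjac
end
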